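/- Balanced edge in a subcubic tree: let T be a finite tree in which every vertex has degree 1 or 3, and let n ≥ 3 be the number of leaves (degree-1 vertices) of T. Then there exists an edge e of T such that, if A and B denote the sets of leaves lying in the two connected components of T with e deleted, then n/3 ≤ |A| ≤ 2n/3 and n/3 ≤ |B| ≤ 2n/3. -/

import Mathlib

open Finset

namespace BalancedAux

open SimpleGraph

variable {V : Type*} [Fintype V] [DecidableEq V] {T : SimpleGraph V}

/-- The set of leaves on the `b`-side after deleting edge `e`. -/
def lside (T : SimpleGraph V) [DecidableRel T.Adj] (e : Sym2 V) (b : V) : Set V :=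
  {l | T.degree l = 1 ∧ (T.deleteEdges {e}).Reachable b l}

variable [DecidableRel T.Adj]

lemma bridge (hT : T.IsTree) {a b : V} (hab : T.Adj a b) :
    ¬ (T.deleteEdges {s(a, b)}).Reachable a b := by
  have h := (isAcyclic_iff_forall_edge_isBridge.mp hT.IsAcyclic) (e := s(a, b)) hab
  exact isBridge_iff.mp h

lemma not_mem_support (hT : T.IsTree) {a b x : V} (hab : T.Adj a b)
    (q : (T.deleteEdges {s(a, b)}).Walk b x) : a ∉ q.support := by
  intro h
  exact bridge hT hab ((q.takeUntil a h).reachable).symm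

lemma reach_of_walk {e : Sym2 V} {c x : V} (p : T.Walk c x) (hp : e ∉ p.edges) :
    (T.deleteEdges {e}).Reachable c x := by
  refine ⟨p.transfer _ fun f hf => ?_⟩
  rw [edgeSet_deleteEdges]
  refine ⟨p.edges_subset_edgeSet hf, ?_⟩
  simp only [Set.mem_singleton_iff]
  rintro rfl
  exact hp hf

lemma exists_path_avoid {e : Sym2 V} {c x : V}
    (h : (T.deleteEdges {e}).Reachable c x) :
    ∃ p : T.Walk c x, p.IsPath ∧ e ∉ p.edges := by
  obtain ⟨q⟩ := h
  refine ⟨(q.bypass).transfer T (fun f hf => ?_), q.bypass_isPath.transfer _, ?_⟩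
  · have h1 := q.bypass.edges_subset_edgeSet hf
    rw [edgeSet_deleteEdges] at h1
    exact h1.1
  · rw [Walk.edges_transfer]
    intro hmem
    have h1 := q.bypass.edges_subset_edgeSet hmem
    rw [edgeSet_deleteEdges] at h1
    exact h1.2 rfl

lemma reach_mono (hT : T.IsTree) {u v w x : V} (huv : T.Adj u v) (hvw : T.Adj v w)
    (hwu : w ≠ u) (h : (T.deleteEdges {s(v, w)}).Reachable w x) :
    (T.deleteEdges {s(u, v)}).Reachable v x := by
  obtain ⟨q⟩ := h
  have hv : v ∉ q.support := not_mem_support hT hvw q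
  have hq : ∀ f ∈ q.edges, f ∈ (T.deleteEdges {s(u, v)}).edgeSet := by
    intro f hf
    have hfT := q.edges_subset_edgeSet hf
    rw [edgeSet_deleteEdges] at hfT
    rw [edgeSet_deleteEdges]
    refine ⟨hfT.1, ?_⟩
    simp only [Set.mem_singleton_iff]
    rintro rfl
    exact hv (q.snd_mem_support_of_mem_edges hf)
  have hadj : (T.deleteEdges {s(u, v)}).Adj v w := by
    rw [deleteEdges_adj]
    refine ⟨hvw, ?_⟩
    simp only [Set.mem_singleton_iff, Sym2.eq_iff]
    rintro (⟨h1, _⟩ | ⟨_, h2⟩)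
    · exact huv.ne h1.symm
    · exact hwu h2
  exact ⟨Walk.cons hadj (q.transfer _ hq)⟩

lemma reach_ssubset (hT : T.IsTree) {u v w : V} (huv : T.Adj u v) (hvw : T.Adj v w)
    (hwu : w ≠ u) :
    {x | (T.deleteEdges {s(v, w)}).Reachable w x}
      ⊂ {x | (T.deleteEdges {s(u, v)}).Reachable v x} := by
  have hsub : {x | (T.deleteEdges {s(v, w)}).Reachable w x}
      ⊆ {x | (T.deleteEdges {s(u, v)}).Reachable v x} :=
    fun x hx => reach_mono hT huv hvw hwu hx
  refine (Set.ssubset_iff_of_subset hsub).mpr ⟨v, Reachable.refl v, fun hc => ?_⟩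
  exact bridge hT hvw (Reachable.symm hc)

lemma exists_leaf_side (hT : T.IsTree) (hdeg : ∀ v : V, T.degree v = 1 ∨ T.degree v = 3) :
    ∀ (k : ℕ) (u v : V), T.Adj u v →
      ({x | (T.deleteEdges {s(u, v)}).Reachable v x}).ncard ≤ k →
      ∃ l, l ∈ lside T s(u, v) v := by
  intro k
  induction k with
  | zero =>
    intro u v huv hk
    exfalso
    have hpos : 0 < ({x | (T.deleteEdges {s(u, v)}).Reachable v x}).ncard :=
      (Set.ncard_pos (Set.toFinite _)).mpr ⟨v, Reachable.refl v⟩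
    omega
  | succ k ih =>
    intro u v huv hk
    rcases hdeg v with h1 | h3
    · exact ⟨v, h1, Reachable.refl v⟩
    · have hu : u ∈ T.neighborFinset v := by
        rw [mem_neighborFinset]; exact huv.symm
      have hcard : ((T.neighborFinset v).erase u).Nonempty := by
        rw [← Finset.card_pos, Finset.card_erase_of_mem hu,
          card_neighborFinset_eq_degree, h3]
        norm_num
      obtain ⟨w, hw⟩ := hcard
      have hwu : w ≠ u := Finset.ne_of_mem_erase hw
      have hvw : T.Adj v w := by
        rw [← mem_neighborFinset]; exact Finset.mem_of_mem_erase hw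
      have hlt := Set.ncard_lt_ncard (reach_ssubset hT huv hvw hwu) (Set.toFinite _)
      obtain ⟨l, hl1, hl2⟩ := ih v w hvw (by omega)
      exact ⟨l, hl1, reach_mono hT huv hvw hwu hl2⟩

lemma cover (hT : T.IsTree) {u v : V} (huv : T.Adj u v) (x : V) :
    (T.deleteEdges {s(u, v)}).Reachable u x ∨ (T.deleteEdges {s(u, v)}).Reachable v x := by
  obtain ⟨p0⟩ := hT.isConnected.preconnected v x
  obtain ⟨p, hp⟩ : ∃ p : T.Walk v x, p.IsPath := ⟨p0.bypass, p0.bypass_isPath⟩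
  cases p with
  | nil => exact Or.inr (Reachable.refl v)
  | cons h q =>
    rename_i y
    rw [Walk.cons_isPath_iff] at hp
    have hqe : s(u, v) ∉ q.edges := fun hc => hp.2 (q.snd_mem_support_of_mem_edges hc)
    by_cases hyu : y = u
    · subst hyu
      exact Or.inl (reach_of_walk q hqe)
    · refine Or.inr (reach_of_walk (Walk.cons h q) ?_)
      intro hc
      rw [Walk.edges_cons] at hc
      rcases List.mem_cons.mp hc with heq | hmem
      · rw [Sym2.eq_iff] at heq
        rcases heq with ⟨h1, _⟩ | ⟨h1, _⟩
        · exact huv.ne h1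
        · exact hyu h1.symm
      · exact hqe hmem

lemma partition_eq (hT : T.IsTree) {u v : V} (huv : T.Adj u v) :
    lside T s(u, v) u ∪ lside T s(u, v) v = {l | T.degree l = 1} := by
  ext l
  simp only [Set.mem_union, Set.mem_setOf_eq, lside]
  constructor
  · rintro (⟨h, _⟩ | ⟨h, _⟩) <;> exact h
  · intro h
    rcases cover hT huv l with h1 | h2
    · exact Or.inl ⟨h, h1⟩
    · exact Or.inr ⟨h, h2⟩

lemma partition_disj (hT : T.IsTree) {u v : V} (huv : T.Adj u v) :
    Disjoint (lside T s(u, v) u) (lside T s(u, v) v) := by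
  rw [Set.disjoint_left]
  rintro l ⟨_, h1⟩ ⟨_, h2⟩
  exact bridge hT huv (h1.trans h2.symm)

lemma side_of_leaf (hT : T.IsTree) {u v : V} (huv : T.Adj u v) (hdv : T.degree v = 1) :
    lside T s(u, v) v = {v} := by
  have huN : u ∈ T.neighborFinset v := by rw [mem_neighborFinset]; exact huv.symm
  have hN : T.neighborFinset v = {u} := by
    obtain ⟨a, ha⟩ := Finset.card_eq_one.mp
      (by rw [card_neighborFinset_eq_degree, hdv] : (T.neighborFinset v).card = 1)
    rw [ha] at huN ⊢
    rw [Finset.mem_singleton] at huN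
    rw [huN]
  ext l
  constructor
  · rintro ⟨hl, hr⟩
    obtain ⟨p, hp, he⟩ := exists_path_avoid hr
    cases p with
    | nil => rfl
    | cons h q =>
      rename_i y
      exfalso
      have hy : y = u := by
        have : y ∈ T.neighborFinset v := by rw [mem_neighborFinset]; exact h
        rw [hN, Finset.mem_singleton] at this
        exact this
      subst hy
      apply he
      rw [Walk.edges_cons, Sym2.eq_swap]
      exact List.mem_cons_self
  · rintro rfl
    exact ⟨hdv, Reachable.refl _⟩

lemma split (hT : T.IsTree) {u v : V} (huv : T.Adj u v) (hdv : T.degree v = 3) :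
    ∃ w1 w2 : V, T.Adj v w1 ∧ T.Adj v w2 ∧ w1 ≠ w2 ∧ w1 ≠ u ∧ w2 ≠ u ∧
      lside T s(u, v) v = lside T s(v, w1) w1 ∪ lside T s(v, w2) w2 ∧
      Disjoint (lside T s(v, w1) w1) (lside T s(v, w2) w2) := by
  have hu : u ∈ T.neighborFinset v := by rw [mem_neighborFinset]; exact huv.symm
  have hc : ((T.neighborFinset v).erase u).card = 2 := by
    rw [Finset.card_erase_of_mem hu, card_neighborFinset_eq_degree, hdv]
  obtain ⟨w1, w2, hne, hset⟩ := Finset.card_eq_two.mp hc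
  have hw1m : w1 ∈ (T.neighborFinset v).erase u := by
    rw [hset]; exact Finset.mem_insert_self _ _
  have hw2m : w2 ∈ (T.neighborFinset v).erase u := by
    rw [hset]; exact Finset.mem_insert_of_mem (Finset.mem_singleton_self _)
  have hw1u : w1 ≠ u := Finset.ne_of_mem_erase hw1m
  have hw2u : w2 ≠ u := Finset.ne_of_mem_erase hw2m
  have hw1 : T.Adj v w1 := by
    rw [← mem_neighborFinset]; exact Finset.mem_of_mem_erase hw1m
  have hw2 : T.Adj v w2 := by
    rw [← mem_neighborFinset]; exact Finset.mem_of_mem_erase hw2m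
  refine ⟨w1, w2, hw1, hw2, hne, hw1u, hw2u, ?_, ?_⟩
  · apply Set.Subset.antisymm
    · rintro l ⟨hl1, hl2⟩
      obtain ⟨p, hp, he⟩ := exists_path_avoid hl2
      cases p with
      | nil => rw [hl1] at hdv; omega
      | cons h q =>
        rename_i y
        rw [Walk.cons_isPath_iff] at hp
        have hyu : y ≠ u := by
          rintro rfl
          apply he
          rw [Walk.edges_cons, Sym2.eq_swap]
          exact List.mem_cons_self
        have hy : y = w1 ∨ y = w2 := by
          have hym : y ∈ (T.neighborFinset v).erase u :=
            Finset.mem_erase.mpr ⟨hyu, by rw [mem_neighborFinset]; exact h⟩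
          rw [hset] at hym
          simpa using hym
        rcases hy with rfl | rfl
        · exact Or.inl ⟨hl1, reach_of_walk q
            (fun hc => hp.2 (q.fst_mem_support_of_mem_edges hc))⟩
        · exact Or.inr ⟨hl1, reach_of_walk q
            (fun hc => hp.2 (q.fst_mem_support_of_mem_edges hc))⟩
    · rintro l (⟨hl1, hl2⟩ | ⟨hl1, hl2⟩)
      · exact ⟨hl1, reach_mono hT huv hw1 hw1u hl2⟩
      · exact ⟨hl1, reach_mono hT huv hw2 hw2u hl2⟩
  · rw [Set.disjoint_left]
    rintro l ⟨hl1, hr1⟩ ⟨_, hr2⟩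
    obtain ⟨q1⟩ := hr1
    have hv1 : v ∉ q1.support := not_mem_support hT hw1 q1
    have hq1 : (T.deleteEdges {s(v, w2)}).Reachable w1 l := by
      refine ⟨q1.transfer _ fun f hf => ?_⟩
      have hfT := q1.edges_subset_edgeSet hf
      rw [edgeSet_deleteEdges] at hfT
      rw [edgeSet_deleteEdges]
      refine ⟨hfT.1, ?_⟩
      simp only [Set.mem_singleton_iff]
      rintro rfl
      exact hv1 (q1.fst_mem_support_of_mem_edges hf)
    have hadj : (T.deleteEdges {s(v, w2)}).Adj w1 v := by
      rw [deleteEdges_adj]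
      refine ⟨hw1.symm, ?_⟩
      simp only [Set.mem_singleton_iff, Sym2.eq_iff]
      rintro (⟨h1, _⟩ | ⟨h1, _⟩)
      · exact hw1.ne h1.symm
      · exact hne h1
    exact bridge hT hw2 ((hr2.trans (hq1.symm.trans hadj.reachable)).symm)

end BalancedAux

open BalancedAux SimpleGraph

/-- balanced edge in a subcubic tree: let T be a finite tree in which
every vertex has degree 1 or 3, and let n ≥ 3 be its number of leaves. Then there is
an edge e = {u,v} of T such that the sets A, B of leaves lying in the two connected
components of T with e deleted (namely, the components of u and of v) both have size
between n/3 and 2n/3. -/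
theorem balanced_edge_in_subcubic_tree {V : Type*} [Fintype V] [DecidableEq V]
    (T : SimpleGraph V) [DecidableRel T.Adj] (hT : T.IsTree)
    (hdeg : ∀ v : V, T.degree v = 1 ∨ T.degree v = 3)
    (n : ℕ) (hn : n = (Finset.univ.filter (fun v : V => T.degree v = 1)).card)
    (h3 : 3 ≤ n) :
    ∃ u v : V, T.Adj u v ∧
      ((n : ℝ) / 3 ≤
          (Nat.card {l : V | T.degree l = 1 ∧ (T.deleteEdges {s(u, v)}).Reachable u l} : ℝ) ∧
        (Nat.card {l : V | T.degree l = 1 ∧ (T.deleteEdges {s(u, v)}).Reachable u l} : ℝ)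
          ≤ 2 * n / 3) ∧
      ((n : ℝ) / 3 ≤
          (Nat.card {l : V | T.degree l = 1 ∧ (T.deleteEdges {s(u, v)}).Reachable v l} : ℝ) ∧
        (Nat.card {l : V | T.degree l = 1 ∧ (T.deleteEdges {s(u, v)}).Reachable v l} : ℝ)
          ≤ 2 * n / 3) := by
  classical
  -- total number of leaves
  have nLeaf : ({l : V | T.degree l = 1}).ncard = n := by
    rw [hn, ← Set.ncard_coe_finset]
    congr 1
    ext l
    simp
  have hsum : ∀ a b : V, T.Adj a b →
      (lside T s(a, b) a).ncard + (lside T s(a, b) b).ncard = n := by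
    intro a b hab
    rw [← Set.ncard_union_eq (partition_disj hT hab) (Set.toFinite _) (Set.toFinite _),
      partition_eq hT hab, nLeaf]
  have hleaf_pos : ∀ a b : V, T.Adj a b → 1 ≤ (lside T s(a, b) b).ncard := by
    intro a b hab
    obtain ⟨l, hl⟩ := exists_leaf_side hT hdeg
      ({x | (T.deleteEdges {s(a, b)}).Reachable b x}).ncard a b hab le_rfl
    exact (Set.ncard_pos (Set.toFinite _)).mpr ⟨l, hl⟩
  -- there is an edge
  obtain ⟨l0, hl0⟩ : ∃ l : V, T.degree l = 1 := by
    have : (Finset.univ.filter (fun v : V => T.degree v = 1)).Nonempty := by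
      rw [← Finset.card_pos]; omega
    obtain ⟨l, hl⟩ := this
    exact ⟨l, (Finset.mem_filter.mp hl).2⟩
  obtain ⟨u0, hu0⟩ : ∃ u0 : V, T.Adj l0 u0 := by
    have : 0 < T.degree l0 := by omega
    rw [← card_neighborFinset_eq_degree, Finset.card_pos] at this
    obtain ⟨u0, hu0⟩ := this
    exact ⟨u0, (mem_neighborFinset _ _ _).mp hu0⟩
  -- candidate predicate
  set P : ℕ → Prop := fun m => ∃ a b : V, T.Adj a b ∧ n ≤ 3 * m ∧
    (lside T s(a, b) b).ncard = m with hP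
  have hPex : ∃ m, P m := by
    have hs := hsum l0 u0 hu0
    by_cases hcase : n ≤ 3 * (lside T s(l0, u0) u0).ncard
    · exact ⟨_, l0, u0, hu0, hcase, rfl⟩
    · refine ⟨(lside T s(u0, l0) l0).ncard, u0, l0, hu0.symm, ?_, rfl⟩
      have hswap : lside T s(u0, l0) l0 = lside T s(l0, u0) l0 := by
        rw [Sym2.eq_swap]
      rw [hswap]
      omega
  set m := Nat.find hPex with hm_def
  obtain ⟨a, b, hab, hnm, hm⟩ := Nat.find_spec hPex
  rw [← hm_def] at hnm hm
  -- upper bound on m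
  have hub : 3 * m ≤ 2 * n := by
    by_contra hgt
    push_neg at hgt
    rcases hdeg b with h1 | h3b
    · have hsingle := side_of_leaf hT hab h1
      rw [hsingle, Set.ncard_singleton] at hm
      omega
    · obtain ⟨w1, w2, hw1, hw2, hne, hw1u, hw2u, hunion, hdisj⟩ := split hT hab h3b
      have hm' : (lside T s(b, w1) w1).ncard + (lside T s(b, w2) w2).ncard = m := by
        rw [← hm, hunion, Set.ncard_union_eq hdisj (Set.toFinite _) (Set.toFinite _)]
      have h1pos := hleaf_pos b w1 hw1
      have h2pos := hleaf_pos b w2 hw2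
      have hor : n ≤ 3 * (lside T s(b, w1) w1).ncard ∨
          n ≤ 3 * (lside T s(b, w2) w2).ncard := by omega
      rcases hor with hc | hc
      · exact Nat.find_min hPex (by omega) ⟨b, w1, hw1, hc, rfl⟩
      · exact Nat.find_min hPex (by omega) ⟨b, w2, hw2, hc, rfl⟩
  -- conclude
  have hsab := hsum a b hab
  set A := (lside T s(a, b) a).ncard with hA_def
  have hAbound : n ≤ 3 * A ∧ 3 * A ≤ 2 * n := by omega
  have hBbound : n ≤ 3 * m ∧ 3 * m ≤ 2 * n := ⟨hnm, hub⟩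
  refine ⟨a, b, hab, ?_, ?_⟩
  · have hcardA : Nat.card {l : V | T.degree l = 1 ∧
        (T.deleteEdges {s(a, b)}).Reachable a l} = A := by
      rw [Nat.card_coe_set_eq]; rfl
    rw [hcardA]
    constructor
    · rw [div_le_iff₀ (by norm_num : (0 : ℝ) < 3)]
      exact_mod_cast (show n ≤ A * 3 by omega)
    · rw [le_div_iff₀ (by norm_num : (0 : ℝ) < 3)]
      push_cast
      have : A * 3 ≤ 2 * n := by omega
      exact_mod_cast this
  · have hcardB : Nat.card {l : V | T.degree l = 1 ∧
        (T.deleteEdges {s(a, b)}).Reachable b l} = m := by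
      rw [Nat.card_coe_set_eq]; exact hm
    rw [hcardB]
    constructor
    · rw [div_le_iff₀ (by norm_num : (0 : ℝ) < 3)]
      exact_mod_cast (show n ≤ m * 3 by omega)
    · rw [le_div_iff₀ (by norm_num : (0 : ℝ) < 3)]
      push_cast
      have : m * 3 ≤ 2 * n := by omega
      exact_mod_cast this
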